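/- For every integer α ≥ 3, one has κ(α² − 2, α − 1, α² − 3) = 2α − 3 and κ(α² − 2, α − 2, α² − 5) = 2α − 2; in particular κ(α²−2, α−2, α²−5) > κ(α²−2, α−1, α²−3). -/

import Mathlib

noncomputable section

/-- The Brill--Noether number `ρ(g,r,d) = g - (r+1)(g-d+r)`. -/
def rho (g r d : ℤ) : ℤ := g - (r + 1) * (g - d + r)

/-- Pflueger's Brill--Noether number `ρ_k(g,r,d)`, the maximum of
`ρ(g,r-ℓ,d) - ℓk` over integers `0 ≤ ℓ ≤ min r (g-d+r-1)`. -/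
def rhoK (g r d k : ℤ) : ℤ :=
  sSup ((fun ℓ : ℤ => rho g (r - ℓ) d - ℓ * k) '' Set.Icc 0 (min r (g - d + r - 1)))

/-- `κ(g,r,d)`: the greatest integer `k ≥ 1` such that `ρ_k(g,r,d) ≥ 0`. -/
def kappa (g r d : ℤ) : ℤ := sSup {k : ℤ | 1 ≤ k ∧ 0 ≤ rhoK g r d k}

/-- `d_max(g,r) = r + ⌈gr/(r+1)⌉ - 1`, the largest `d` with `ρ(g,r,d) < 0`. -/
def dmax (g r : ℤ) : ℤ := r + ⌈((g : ℚ) * r) / ((r : ℚ) + 1)⌉ - 1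

/-
Shifting `r` down by `ℓ` changes the Brill–Noether number by a quadratic in `ℓ`:
`ρ(g, r-ℓ, d) - ℓk = ρ + ℓ(2r + g - d + 1 - ℓ - k)`. The choice `ℓ = 1` shows `ρ_k ≥ 0` for
`k ≤ ρ + 2r + g - d`, and for larger `k` every term is at most `ρ - ρℓ - ℓ²`, which is negative
when `-4 < ρ < 0` because the discriminant `ρ(ρ + 4)` of `ℓ² + ρℓ - ρ` is then negative. In both
cases of the theorem `ρ ∈ {-2, -1}` and `2r + g - d = 2α - 1`.
-/

theorem rho_sub_eq (g r d ℓ : ℤ) :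
    rho g (r - ℓ) d = rho g r d + ℓ * (2 * r + g - d + 1 - ℓ) := by
  simp only [rho]; ring

theorem le_rhoK {g r d ℓ : ℤ} (k : ℤ) (h0 : 0 ≤ ℓ) (h1 : ℓ ≤ min r (g - d + r - 1)) :
    rho g (r - ℓ) d - ℓ * k ≤ rhoK g r d k :=
  le_csSup ((Set.finite_Icc _ _).image _).bddAbove
    (Set.mem_image_of_mem _ (Set.mem_Icc.2 ⟨h0, h1⟩))

theorem rhoK_le {g r d k B : ℤ} (h0 : 0 ≤ min r (g - d + r - 1))
    (hB : ∀ ℓ, 0 ≤ ℓ → ℓ ≤ min r (g - d + r - 1) → rho g (r - ℓ) d - ℓ * k ≤ B) :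
    rhoK g r d k ≤ B := by
  apply csSup_le ⟨_, Set.mem_image_of_mem _ (Set.mem_Icc.2 ⟨le_rfl, h0⟩)⟩
  rintro _ ⟨ℓ, ⟨hℓ0, hℓ1⟩, rfl⟩
  exact hB ℓ hℓ0 hℓ1

theorem kappa_eq_of_forall_lt {g r d K : ℤ} (hK : 1 ≤ K) (hKmem : 0 ≤ rhoK g r d K)
    (hlt : ∀ k, K < k → rhoK g r d k < 0) : kappa g r d = K :=
  IsGreatest.csSup_eq ⟨⟨hK, hKmem⟩, fun k hk => not_lt.1 fun h => (hlt k h).not_ge hk.2⟩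

theorem kappa_eq_of_neg_three_le_rho {g r d : ℤ} (hρ : rho g r d < 0) (hρ3 : -3 ≤ rho g r d)
    (hr : 1 ≤ r) (hs : 2 ≤ g - d + r) (hK : 1 ≤ rho g r d + 2 * r + g - d) :
    kappa g r d = rho g r d + 2 * r + g - d := by
  have hrange : 1 ≤ min r (g - d + r - 1) := le_min hr (by linarith)
  apply kappa_eq_of_forall_lt hK
  · have h := le_rhoK (rho g r d + 2 * r + g - d) zero_le_one hrange
    rw [rho_sub_eq] at h
    linarith
  · intro k hk
    have hneg : rhoK g r d k ≤ -1 := by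
      refine rhoK_le (zero_le_one.trans hrange) fun ℓ hℓ _ => ?_
      rw [rho_sub_eq]
      have hdisc : 0 < ℓ ^ 2 + rho g r d * ℓ - rho g r d := by
        nlinarith [sq_nonneg (2 * ℓ + rho g r d)]
      nlinarith [mul_le_mul_of_nonneg_left hk.le hℓ]
    linarith

theorem stmt19 (α : ℤ) (hα : 3 ≤ α) :
    kappa (α ^ 2 - 2) (α - 1) (α ^ 2 - 3) = 2 * α - 3 ∧
    kappa (α ^ 2 - 2) (α - 2) (α ^ 2 - 5) = 2 * α - 2 ∧
    kappa (α ^ 2 - 2) (α - 1) (α ^ 2 - 3) < kappa (α ^ 2 - 2) (α - 2) (α ^ 2 - 5) := by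
  have hρ₁ : rho (α ^ 2 - 2) (α - 1) (α ^ 2 - 3) = -2 := by simp only [rho]; ring
  have hρ₂ : rho (α ^ 2 - 2) (α - 2) (α ^ 2 - 5) = -1 := by simp only [rho]; ring
  have hκ₁ : kappa (α ^ 2 - 2) (α - 1) (α ^ 2 - 3) = 2 * α - 3 := by
    rw [kappa_eq_of_neg_three_le_rho (by omega) (by omega) (by omega) (by omega) (by omega), hρ₁]
    ring
  have hκ₂ : kappa (α ^ 2 - 2) (α - 2) (α ^ 2 - 5) = 2 * α - 2 := by
    rw [kappa_eq_of_neg_three_le_rho (by omega) (by omega) (by omega) (by omega) (by omega), hρ₂]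
    ring
  exact ⟨hκ₁, hκ₂, by omega⟩
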